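/- arXiv:2103.09999 — 4 statements merged into one kernel-verified Lean document; each statement's English description precedes it below -/
import Mathlib

section
/- (Faithfulness) For any n-qubit unitary U, s(U) ≤ 4^n (so v(U) ≥ 0), and s(U) = 4^n (i.e., v(U) = 0) if and only if U is a Clifford unitary. -/
open Matrix Complex
open scoped Matrix ComplexConjugate Pointwise

noncomputable section

/-- `n`-qubit operators: matrices indexed by computational basis strings. -/
abbrev QOp (n : ℕ) := Matrix (Fin n → Fin 2) (Fin n → Fin 2) ℂ

/-- `n`-qubit state vectors. -/
abbrev QVec (n : ℕ) := (Fin n → Fin 2) → ℂ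

/-- Labels of the quotient Pauli group: one pair of bits `(a,b)` (meaning `X^a Z^b`
up to phase, i.e. `I, X, Y, Z`) per qubit.  This is the standard symplectic
encoding of the strings `{0,1,2,3}^n`, with the additive (Klein) group structure
being exactly multiplication in the Pauli group modulo phases. -/
abbrev PauliLabel (n : ℕ) := Fin n → ZMod 2 × ZMod 2

def pauliX : Matrix (Fin 2) (Fin 2) ℂ := !![0,1;1,0]
def pauliY : Matrix (Fin 2) (Fin 2) ℂ := !![0,-Complex.I;Complex.I,0]
def pauliZ : Matrix (Fin 2) (Fin 2) ℂ := !![1,0;0,-1]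

/-- The single-qubit Pauli matrix with label `(a,b)`: `I, X, Y, Z`. -/
def pauli1 (ab : ZMod 2 × ZMod 2) : Matrix (Fin 2) (Fin 2) ℂ :=
  if ab = (0,0) then 1 else if ab = (1,0) then pauliX
  else if ab = (1,1) then pauliY else pauliZ

/-- The Pauli string `σ_u = σ_{u_1} ⊗ ⋯ ⊗ σ_{u_n}`. -/
def pauliStr {n : ℕ} (u : PauliLabel n) : QOp n :=
  Matrix.of fun x y => ∏ k, pauli1 (u k) (x k) (y k)

/-- The unitary Pauli function `P_U(u|v) = tr(σ_u U σ_v U†)/2^n`. -/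
def PauliFun {n : ℕ} (U : QOp n) (u v : PauliLabel n) : ℂ :=
  (pauliStr u * U * pauliStr v * Uᴴ).trace / 2 ^ n

/-- `s(U)`: the number of pairs `(u,v)` with `P_U(u|v) = ±1`. -/
def sU {n : ℕ} (U : QOp n) : ℕ :=
  Set.ncard {p : PauliLabel n × PauliLabel n |
    PauliFun U p.1 p.2 = 1 ∨ PauliFun U p.1 p.2 = -1}

/-- The unitary stabilizer nullity `v(U) = 2n − log₂ s(U)`. -/
def nullity {n : ℕ} (U : QOp n) : ℝ := 2 * n - Real.logb 2 (sU U)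

/-- The state Pauli function `P_{|ψ⟩}(u) = ⟨ψ|σ_u|ψ⟩`. -/
def statePauliFun {n : ℕ} (ψ : QVec n) (u : PauliLabel n) : ℂ :=
  star ψ ⬝ᵥ (pauliStr u).mulVec ψ

/-- `s(|ψ⟩)`: number of labels `u` with `⟨ψ|σ_u|ψ⟩ = ±1`. -/
def sState {n : ℕ} (ψ : QVec n) : ℕ :=
  Set.ncard {u : PauliLabel n | statePauliFun ψ u = 1 ∨ statePauliFun ψ u = -1}

/-- The state stabilizer nullity `v_s(|ψ⟩) = n − log₂ s(|ψ⟩)`. -/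
def stateNullity {n : ℕ} (ψ : QVec n) : ℝ := n - Real.logb 2 (sState ψ)

/-- The `n`-qubit Pauli group with phases `±1, ±i`, as a set of matrices. -/
def fullPauliGroup (n : ℕ) : Set (QOp n) :=
  {P | ∃ (c : ℂ) (u : PauliLabel n),
    (c = 1 ∨ c = -1 ∨ c = Complex.I ∨ c = -Complex.I) ∧ P = c • pauliStr u}

/-- A Clifford unitary: a unitary with `U P̂_n U† = P̂_n`. -/
def IsClifford {n : ℕ} (U : QOp n) : Prop :=
  U ∈ Matrix.unitaryGroup (Fin n → Fin 2) ℂ ∧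
    (fun P => U * P * Uᴴ) '' fullPauliGroup n = fullPauliGroup n

/-- The subgroup (as a set of labels) associated with `U`:
`P_U = (U P_n U†) ∩ P_n` modulo phases. -/
def PsubU {n : ℕ} (U : QOp n) : Set (PauliLabel n) :=
  {u | ∃ (v : PauliLabel n) (c : ℂ),
    (c = 1 ∨ c = -1 ∨ c = Complex.I ∨ c = -Complex.I) ∧
      U * pauliStr v * Uᴴ = c • pauliStr u}

/-- Tensor product of an `n`-qubit and an `m`-qubit operator. -/
def tensorOp {n m : ℕ} (U : QOp n) (V : QOp m) : QOp (n + m) :=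
  Matrix.of fun x y =>
    U (fun i => x (Fin.castAdd m i)) (fun i => y (Fin.castAdd m i)) *
    V (fun j => x (Fin.natAdd n j)) (fun j => y (Fin.natAdd n j))

/-- The first `n` symbols of a label on `n+m` qubits. -/
def fstLab {n m : ℕ} (u : PauliLabel (n + m)) : PauliLabel n :=
  fun i => u (Fin.castAdd m i)

/-- The last `m` symbols of a label on `n+m` qubits. -/
def sndLab {n m : ℕ} (u : PauliLabel (n + m)) : PauliLabel m :=
  fun j => u (Fin.natAdd n j)

/-- The T gate acting on qubit `q` (tensored with identity elsewhere). -/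
def TgateOn (n : ℕ) (q : Fin n) : QOp n :=
  Matrix.of fun x y =>
    if x = y then (if x q = 0 then 1 else Complex.exp (Complex.I * (Real.pi / 4))) else 0

/-- The single-qubit T gate `diag(1, e^{iπ/4})`. -/
def Tgate : QOp 1 := TgateOn 1 0

/-- The `n`-fold tensor power of the Hadamard gate. -/
def HadN (n : ℕ) : QOp n :=
  Matrix.of fun x y =>
    ∏ k, ((1 / (Real.sqrt 2) : ℂ) * (if x k = 1 ∧ y k = 1 then -1 else 1))

/-- The multi-controlled Z gate `C^{n-1}Z`. -/
def CnZ (n : ℕ) : QOp n :=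
  Matrix.of fun x y => if x = y then (if ∀ k, x k = 1 then -1 else 1) else 0

/-- The computational basis state `|0⟩^{⊗n}`. -/
def ket0 (n : ℕ) : QVec n := fun x => if x = fun _ => (0 : Fin 2) then 1 else 0

/-- The state `|+⟩^{⊗n}`. -/
def ketPlus (n : ℕ) : QVec n := fun _ => (1 / (Real.sqrt 2 : ℂ)) ^ n

/-- The `2n`-qubit maximally entangled state `2^{-n/2} ∑_x |x⟩|x⟩`. -/
def maxEnt (n : ℕ) : QVec (n + n) := fun x =>
  if (fun i => x (Fin.castAdd n i)) = (fun j => x (Fin.natAdd n j))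
  then (1 / (Real.sqrt 2 : ℂ)) ^ n else 0

end

/-!
`tr(σ_u U σ_v U†)/2^n` is the normalized Hilbert–Schmidt inner product of the unitaries `σ_u`
and `U σ_v U†`, so it equals a unit `ε` exactly in the equality case of Cauchy–Schwarz, i.e. when
`U σ_v U† = ε σ_u`. Pauli strings are trace-orthogonal, so for each `v` at most one `u` qualifies:
`s(U) ≤ 4^n`, with equality iff `U` maps every Pauli string to a signed Pauli string. Since
conjugation by `U` is injective, the induced map on labels is then a bijection, which makes `U`
Clifford; conversely the image of the Hermitian `σ_v` under a Clifford `U` is a Hermitian element of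
`P̂_n`, whose phase must be `±1`.
-/

namespace Matrix

variable {ι m R : Type*} [Fintype ι] [CommSemiring R]

def piKron (A : ι → Matrix m m R) : Matrix (ι → m) (ι → m) R :=
  of fun x y => ∏ k, A k (x k) (y k)

theorem piKron_mul_piKron [DecidableEq ι] [Fintype m] (A B : ι → Matrix m m R) :
    piKron A * piKron B = piKron fun k => A k * B k := by
  ext x y
  simp only [piKron, mul_apply, of_apply, ← Finset.prod_mul_distrib, Fintype.prod_sum]

theorem piKron_one [DecidableEq m] : piKron (fun _ : ι => (1 : Matrix m m R)) = 1 := by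
  ext x y
  simp only [piKron, of_apply, one_apply, Fintype.prod_boole, funext_iff]

theorem conjTranspose_piKron [StarRing R] (A : ι → Matrix m m R) :
    (piKron A)ᴴ = piKron fun k => (A k)ᴴ := by
  ext x y
  simp [piKron, conjTranspose_apply]

theorem trace_piKron [DecidableEq ι] [Fintype m] (A : ι → Matrix m m R) :
    (piKron A).trace = ∏ k, (A k).trace := by
  simp only [trace, diag, piKron, of_apply, Fintype.prod_sum]

end Matrix

theorem pauli1_zero : pauli1 0 = 1 := if_pos rfl

theorem pauli1_conjTranspose (ab : ZMod 2 × ZMod 2) : (pauli1 ab)ᴴ = pauli1 ab := by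
  obtain ⟨a, b⟩ := ab
  fin_cases a <;> fin_cases b <;> ext i j <;> fin_cases i <;> fin_cases j <;>
    simp +decide [pauli1, pauliX, pauliY, pauliZ]

theorem pauli1_mul_self (ab : ZMod 2 × ZMod 2) : pauli1 ab * pauli1 ab = 1 := by
  obtain ⟨a, b⟩ := ab
  fin_cases a <;> fin_cases b <;> ext i j <;> fin_cases i <;> fin_cases j <;>
    simp +decide [pauli1, pauliX, pauliY, pauliZ, Matrix.mul_apply, Fin.sum_univ_two]

theorem trace_pauli1_mul (ab cd : ZMod 2 × ZMod 2) :
    (pauli1 ab * pauli1 cd).trace = if ab = cd then 2 else 0 := by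
  obtain ⟨a, b⟩ := ab
  obtain ⟨c, d⟩ := cd
  fin_cases a <;> fin_cases b <;> fin_cases c <;> fin_cases d <;>
    simp +decide [pauli1, pauliX, pauliY, pauliZ, Matrix.trace_fin_two, one_add_one_eq_two]

section PauliStrings

variable {n : ℕ}

theorem pauliStr_eq_piKron (u : PauliLabel n) : pauliStr u = piKron fun k => pauli1 (u k) := rfl

theorem pauliStr_zero : pauliStr (0 : PauliLabel n) = 1 := by
  simp only [pauliStr_eq_piKron, Pi.zero_apply, pauli1_zero, piKron_one]

theorem pauliStr_conjTranspose (u : PauliLabel n) : (pauliStr u)ᴴ = pauliStr u := by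
  simp only [pauliStr_eq_piKron, conjTranspose_piKron, pauli1_conjTranspose]

theorem pauliStr_mul_self (u : PauliLabel n) : pauliStr u * pauliStr u = 1 := by
  simp only [pauliStr_eq_piKron, piKron_mul_piKron, pauli1_mul_self, piKron_one]

theorem trace_pauliStr_mul (u v : PauliLabel n) :
    (pauliStr u * pauliStr v).trace = if u = v then 2 ^ n else 0 := by
  simp only [pauliStr_eq_piKron, piKron_mul_piKron, trace_piKron, trace_pauli1_mul]
  split_ifs with h
  · simp [h]
  · obtain ⟨k, hk⟩ := Function.ne_iff.mp h
    exact Finset.prod_eq_zero (Finset.mem_univ k) (if_neg hk)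

theorem eq_and_eq_of_smul_pauliStr_eq {c d : ℂ} {u v : PauliLabel n} (hc : c ≠ 0)
    (h : c • pauliStr u = d • pauliStr v) : u = v ∧ c = d := by
  have htr := congrArg (fun M => (pauliStr u * M).trace) h
  simp only [Matrix.mul_smul, trace_smul, trace_pauliStr_mul, if_pos, smul_eq_mul] at htr
  have h2n : (2 : ℂ) ^ n ≠ 0 := pow_ne_zero _ two_ne_zero
  by_cases huv : u = v
  · subst huv
    exact ⟨rfl, mul_right_cancel₀ h2n (by simpa using htr)⟩
  · simp [huv, hc, h2n] at htr

end PauliStrings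

theorem Matrix.eq_of_trace_conjTranspose_mul_eq_card {m : Type*} [Fintype m] [DecidableEq m]
    {A B : Matrix m m ℂ} (hA : A ∈ unitaryGroup m ℂ) (hB : B ∈ unitaryGroup m ℂ)
    (h : (Aᴴ * B).trace = Fintype.card m) : A = B := by
  have hAA : Aᴴ * A = 1 := mem_unitaryGroup_iff'.mp hA
  have hBB : Bᴴ * B = 1 := mem_unitaryGroup_iff'.mp hB
  have hBA : (Bᴴ * A).trace = Fintype.card m := by
    rw [← conjTranspose_conjTranspose A, ← conjTranspose_mul, trace_conjTranspose, h,
      star_natCast]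
  have hnorm : ((A - B)ᴴ * (A - B)).trace = 0 := by
    simp only [conjTranspose_sub, Matrix.sub_mul, Matrix.mul_sub, trace_sub, hAA, hBB, h, hBA,
      trace_one]
    ring
  open scoped ComplexOrder in
  exact sub_eq_zero.mp (trace_conjTranspose_mul_self_eq_zero_iff.mp hnorm)

section Unitary

variable {n : ℕ} {U : QOp n}

theorem card_computationalBasis : Fintype.card (Fin n → Fin 2) = 2 ^ n := by
  simp

theorem conj_mem_unitaryGroup (hU : U ∈ unitaryGroup (Fin n → Fin 2) ℂ) {V : QOp n}
    (hV : V ∈ unitaryGroup (Fin n → Fin 2) ℂ) : U * V * Uᴴ ∈ unitaryGroup (Fin n → Fin 2) ℂ :=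
  Submonoid.mul_mem _ (Submonoid.mul_mem _ hU hV) (Unitary.star_mem hU)

theorem pauliStr_mem_unitaryGroup (u : PauliLabel n) :
    pauliStr u ∈ unitaryGroup (Fin n → Fin 2) ℂ := by
  rw [mem_unitaryGroup_iff', star_eq_conjTranspose, pauliStr_conjTranspose, pauliStr_mul_self]

theorem smul_pauliStr_mem_unitaryGroup {ε : ℂ} (hε : star ε * ε = 1) (u : PauliLabel n) :
    ε • pauliStr u ∈ unitaryGroup (Fin n → Fin 2) ℂ := by
  rw [mem_unitaryGroup_iff', star_eq_conjTranspose, conjTranspose_smul, pauliStr_conjTranspose,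
    smul_mul_smul, pauliStr_mul_self, hε, one_smul]

theorem pauliFun_eq_of_conj {u v : PauliLabel n} {c : ℂ}
    (h : U * pauliStr v * Uᴴ = c • pauliStr u) : PauliFun U u v = c := by
  rw [PauliFun, Matrix.mul_assoc, Matrix.mul_assoc, ← Matrix.mul_assoc U, h, Matrix.mul_smul,
    pauliStr_mul_self, trace_smul, trace_one, card_computationalBasis, smul_eq_mul]
  push_cast
  exact mul_div_cancel_right₀ c (pow_ne_zero _ two_ne_zero)

theorem pauliFun_eq_iff (hU : U ∈ unitaryGroup (Fin n → Fin 2) ℂ) {u v : PauliLabel n} {ε : ℂ}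
    (hε : star ε * ε = 1) : PauliFun U u v = ε ↔ U * pauliStr v * Uᴴ = ε • pauliStr u := by
  refine ⟨fun h => ?_, pauliFun_eq_of_conj⟩
  refine (eq_of_trace_conjTranspose_mul_eq_card (smul_pauliStr_mem_unitaryGroup hε u)
    (conj_mem_unitaryGroup hU (pauliStr_mem_unitaryGroup v)) ?_).symm
  rw [PauliFun, div_eq_iff (pow_ne_zero _ two_ne_zero)] at h
  rw [conjTranspose_smul, pauliStr_conjTranspose, Matrix.smul_mul, trace_smul,
    card_computationalBasis, ← Matrix.mul_assoc, ← Matrix.mul_assoc, h, smul_eq_mul, ← mul_assoc,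
    hε, one_mul]
  norm_num

end Unitary

theorem phase_mul {c d : ℂ} (hc : c = 1 ∨ c = -1 ∨ c = I ∨ c = -I)
    (hd : d = 1 ∨ d = -1 ∨ d = I ∨ d = -I) :
    c * d = 1 ∨ c * d = -1 ∨ c * d = I ∨ c * d = -I := by
  rcases hc with rfl | rfl | rfl | rfl <;> rcases hd with rfl | rfl | rfl | rfl <;>
    norm_num

theorem phase_eq_one_or_neg_one_of_star_eq {c : ℂ} (hc : c = 1 ∨ c = -1 ∨ c = I ∨ c = -I)
    (hstar : star c = c) : c = 1 ∨ c = -1 := by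
  rcases hc with rfl | rfl | rfl | rfl <;> simp [Complex.ext_iff] at hstar ⊢ <;>
    norm_num at hstar

section SignedPairs

variable {n : ℕ} {U : QOp n}

def signedPauliConjPairs (U : QOp n) : Set (PauliLabel n × PauliLabel n) :=
  {p | ∃ ε : ℂ, (ε = 1 ∨ ε = -1) ∧ U * pauliStr p.2 * Uᴴ = ε • pauliStr p.1}

theorem sU_eq_ncard_signedPauliConjPairs (hU : U ∈ unitaryGroup (Fin n → Fin 2) ℂ) :
    sU U = (signedPauliConjPairs U).ncard := by
  have hsign {ε : ℂ} (hε : ε = 1 ∨ ε = -1) : star ε * ε = 1 := by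
    rcases hε with rfl | rfl <;> simp
  rw [sU]
  congr 1
  ext p
  constructor
  · rintro (h | h)
    · exact ⟨1, .inl rfl, (pauliFun_eq_iff hU (hsign (.inl rfl))).mp h⟩
    · exact ⟨-1, .inr rfl, (pauliFun_eq_iff hU (hsign (.inr rfl))).mp h⟩
  · rintro ⟨ε, hε, h⟩
    change PauliFun U p.1 p.2 = 1 ∨ PauliFun U p.1 p.2 = -1
    rwa [pauliFun_eq_of_conj h]

theorem injOn_snd_signedPauliConjPairs (U : QOp n) :
    Set.InjOn Prod.snd (signedPauliConjPairs U) := by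
  rintro ⟨u₁, v⟩ ⟨ε₁, hε₁, h₁⟩ ⟨u₂, v'⟩ ⟨ε₂, -, h₂⟩ (rfl : v = v')
  have hε₁ : ε₁ ≠ 0 := by rcases hε₁ with rfl | rfl <;> norm_num
  exact Prod.ext (eq_and_eq_of_smul_pauliStr_eq hε₁ (h₁.symm.trans h₂)).1 rfl

theorem zero_mem_signedPauliConjPairs (hU : U ∈ unitaryGroup (Fin n → Fin 2) ℂ) :
    (0, 0) ∈ signedPauliConjPairs U :=
  ⟨1, .inl rfl, by
    change U * pauliStr 0 * Uᴴ = (1 : ℂ) • pauliStr 0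
    rw [pauliStr_zero, Matrix.mul_one, one_smul]
    exact mem_unitaryGroup_iff.mp hU⟩

theorem nat_card_pauliLabel : Nat.card (PauliLabel n) = 4 ^ n := by
  simp [Nat.card_eq_fintype_card]

theorem sU_le (hU : U ∈ unitaryGroup (Fin n → Fin 2) ℂ) : sU U ≤ 4 ^ n := by
  rw [sU_eq_ncard_signedPauliConjPairs hU, ← (injOn_snd_signedPauliConjPairs U).ncard_image,
    ← nat_card_pauliLabel]
  exact Set.ncard_le_card _

theorem one_le_sU (hU : U ∈ unitaryGroup (Fin n → Fin 2) ℂ) : 1 ≤ sU U := by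
  rw [sU_eq_ncard_signedPauliConjPairs hU]
  exact (Set.ncard_pos (Set.toFinite _)).mpr ⟨_, zero_mem_signedPauliConjPairs hU⟩

theorem sU_eq_four_pow_iff (hU : U ∈ unitaryGroup (Fin n → Fin 2) ℂ) :
    sU U = 4 ^ n ↔ ∀ v, ∃ u, (u, v) ∈ signedPauliConjPairs U := by
  rw [sU_eq_ncard_signedPauliConjPairs hU, ← (injOn_snd_signedPauliConjPairs U).ncard_image,
    ← nat_card_pauliLabel, ← Set.eq_univ_iff_ncard, Set.eq_univ_iff_forall]
  simp

end SignedPairs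

section Clifford

variable {n : ℕ} {U : QOp n}

theorem unitary_conj_injective (hU : U ∈ unitaryGroup (Fin n → Fin 2) ℂ) :
    Function.Injective fun A : QOp n => U * A * Uᴴ := by
  have hUU : Uᴴ * U = 1 := mem_unitaryGroup_iff'.mp hU
  refine Function.LeftInverse.injective (g := fun B => Uᴴ * B * U) fun A => ?_
  simp only [← Matrix.mul_assoc, hUU, Matrix.one_mul]
  rw [Matrix.mul_assoc, hUU, Matrix.mul_one]

theorem IsClifford.exists_mem_signedPauliConjPairs (hC : IsClifford U) (v : PauliLabel n) :
    ∃ u, (u, v) ∈ signedPauliConjPairs U := by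
  obtain ⟨c, u, hc, hconj⟩ : U * pauliStr v * Uᴴ ∈ fullPauliGroup n :=
    hC.2 ▸ ⟨pauliStr v, ⟨1, v, .inl rfl, (one_smul _ _).symm⟩, rfl⟩
  have hstar : star c • pauliStr u = c • pauliStr u :=
    calc star c • pauliStr u = (c • pauliStr u)ᴴ := by
          rw [conjTranspose_smul, pauliStr_conjTranspose]
      _ = (U * pauliStr v * Uᴴ)ᴴ := by rw [hconj]
      _ = U * pauliStr v * Uᴴ := by
          simp only [conjTranspose_mul, conjTranspose_conjTranspose, pauliStr_conjTranspose,
            Matrix.mul_assoc]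
      _ = c • pauliStr u := hconj
  have hc0 : star c ≠ 0 := by
    rcases hc with rfl | rfl | rfl | rfl <;> simp
  have hreal : star c = c := (eq_and_eq_of_smul_pauliStr_eq hc0 hstar).2
  exact ⟨u, c, phase_eq_one_or_neg_one_of_star_eq hc hreal, hconj⟩

theorem isClifford_of_forall_mem_signedPauliConjPairs
    (hU : U ∈ unitaryGroup (Fin n → Fin 2) ℂ)
    (h : ∀ v, ∃ u, (u, v) ∈ signedPauliConjPairs U) : IsClifford U := by
  choose f ε hε hf using h
  have hphase v : ε v = 1 ∨ ε v = -1 ∨ ε v = I ∨ ε v = -I := (hε v).imp_right .inl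
  have hf_inj : Function.Injective f := by
    intro v₁ v₂ hv
    have hε₂ : ε v₂ ≠ 0 := by rcases hε v₂ with h | h <;> simp [h]
    refine (eq_and_eq_of_smul_pauliStr_eq (d := ε v₁) hε₂ (unitary_conj_injective hU ?_)).1
    simp only [Matrix.mul_smul, Matrix.smul_mul, hf, hv, smul_smul, mul_comm]
  refine ⟨hU, Set.ext fun Q => ⟨?_, ?_⟩⟩
  · rintro ⟨P, ⟨c, v, hc, rfl⟩, rfl⟩
    refine ⟨c * ε v, f v, phase_mul hc (hphase v), ?_⟩
    simp only [Matrix.mul_smul, Matrix.smul_mul, hf, smul_smul]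
  · rintro ⟨c, u, hc, rfl⟩
    obtain ⟨v, rfl⟩ := Finite.surjective_of_injective hf_inj u
    refine ⟨(c * ε v) • pauliStr v, ⟨c * ε v, v, phase_mul hc (hphase v), rfl⟩, ?_⟩
    have hεε : ε v * ε v = 1 := by rcases hε v with h | h <;> simp [h]
    simp only [Matrix.mul_smul, Matrix.smul_mul, hf, smul_smul, mul_assoc, hεε, mul_one]

theorem isClifford_iff (hU : U ∈ unitaryGroup (Fin n → Fin 2) ℂ) :
    IsClifford U ↔ ∀ v, ∃ u, (u, v) ∈ signedPauliConjPairs U :=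
  ⟨IsClifford.exists_mem_signedPauliConjPairs, isClifford_of_forall_mem_signedPauliConjPairs hU⟩

end Clifford

theorem logb_two_four_pow (n : ℕ) : Real.logb 2 (4 ^ n) = 2 * n := by
  rw [show (4 : ℝ) = 2 ^ 2 by norm_num, ← pow_mul, Real.logb_pow, Real.logb_self_eq_one one_lt_two]
  push_cast
  ring

section Nullity

variable {n : ℕ} {U : QOp n}

theorem nullity_eq : nullity U = Real.logb 2 (4 ^ n) - Real.logb 2 (sU U) := by
  rw [nullity, logb_two_four_pow]

theorem nullity_nonneg (hU : U ∈ unitaryGroup (Fin n → Fin 2) ℂ) : 0 ≤ nullity U := by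
  have hpos : (0 : ℝ) < sU U := by exact_mod_cast one_le_sU hU
  rw [nullity_eq, sub_nonneg]
  exact Real.logb_le_logb_of_le one_lt_two hpos (by exact_mod_cast sU_le hU)

theorem nullity_eq_zero_iff (hU : U ∈ unitaryGroup (Fin n → Fin 2) ℂ) :
    nullity U = 0 ↔ sU U = 4 ^ n := by
  have hpos : (0 : ℝ) < sU U := by exact_mod_cast one_le_sU hU
  rw [nullity_eq, sub_eq_zero,
    (Real.logb_injOn_pos one_lt_two).eq_iff (Set.mem_Ioi.mpr (by positivity)) (Set.mem_Ioi.mpr hpos)]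
  exact_mod_cast eq_comm

end Nullity

theorem faithfulness {n : ℕ} (U : QOp n)
    (hU : U ∈ Matrix.unitaryGroup (Fin n → Fin 2) ℂ) :
    sU U ≤ 4 ^ n ∧ 0 ≤ nullity U ∧
      (sU U = 4 ^ n ↔ IsClifford U) ∧ (nullity U = 0 ↔ IsClifford U) := by
  have hClifford : sU U = 4 ^ n ↔ IsClifford U :=
    (sU_eq_four_pow_iff hU).trans (isClifford_iff hU).symm
  exact ⟨sU_le hU, nullity_nonneg hU, hClifford, (nullity_eq_zero_iff hU).trans hClifford⟩
end

section
/- For any diagonal n-qubit unitary U and any Pauli string u, the inner product ⟨+|^{⊗n} U† σ_u U |+⟩^{⊗n} equals ±1 if and only if U† σ_u U ∈ ±{I,X}^{⊗n}. -/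
open Matrix Complex
open scoped Matrix ComplexConjugate Pointwise

/-! For diagonal `U = diag d`, the matrix `U† σ_u U` is, like `σ_u`, monomial: row `x` has a
single nonzero entry `t x = conj (d x) · phase · d (x ⊕ a)` of modulus one, in column
`x ⊕ a`, where `a` is the `X`-part of `u`. The expectation in `|+⟩^{⊗n}` is the average of
the `t x`, and an average of points of the closed unit disc lies on the unit circle at `c`
only if all of them equal `c`. So `t ≡ ±1` and `U† σ_u U = ±X^a`; conversely `X`-type
strings fix `|+⟩^{⊗n}`. -/

theorem eq_of_norm_le_one_of_sum_eq_card_mul {ι : Type*} [Fintype ι] {t : ι → ℂ} {c : ℂ}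
    (ht : ∀ i, ‖t i‖ ≤ 1) (hc : ‖c‖ = 1) (hsum : ∑ i, t i = Fintype.card ι * c)
    (i : ι) :
    t i = c := by
  -- after rotating by `conj c`, the real parts are at most `1` and sum to `card ι`
  set w : ι → ℂ := fun i => t i * conj c
  have hw : ∀ i, ‖w i‖ ≤ 1 := fun i => by simpa [w, hc] using ht i
  have hre : ∀ i, (w i).re ≤ 1 := fun i => (re_le_norm _).trans (hw i)
  have hsum_re : ∑ i, (w i).re = ∑ _i : ι, (1 : ℝ) := by
    rw [← Complex.re_sum, ← Finset.sum_mul, hsum, mul_assoc, Complex.mul_conj', hc]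
    simp
  have hwi : (w i).re = 1 :=
    (Finset.sum_eq_sum_iff_of_le fun i _ => hre i).1 hsum_re i (Finset.mem_univ i)
  have him : (w i).im = 0 :=
    abs_re_eq_norm.1 (le_antisymm (abs_re_le_norm _) (by rw [hwi, abs_one]; exact hw i))
  calc t i = w i * c := by simp only [w, mul_assoc, Complex.conj_mul', hc]; simp
    _ = c := by rw [show w i = 1 from Complex.ext hwi him, one_mul]

def bitFlip (i : Fin 2) (a : ZMod 2) : Fin 2 := if a = 0 then i else i + 1

def flipBits {n : ℕ} (a : Fin n → ZMod 2) (x : Fin n → Fin 2) : Fin n → Fin 2 :=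
  fun k => bitFlip (x k) (a k)

-- `σ_{(a,b)} = i^{ab} X^a Z^b`, whose only nonzero entry in column `j` is this phase.
def pauliPhase1 (ab : ZMod 2 × ZMod 2) (j : Fin 2) : ℂ :=
  (if ab = (1, 1) then I else 1) * (if ab.2 = 1 ∧ j = 1 then -1 else 1)

def pauliPhase {n : ℕ} (u : PauliLabel n) (y : Fin n → Fin 2) : ℂ :=
  ∏ k, pauliPhase1 (u k) (y k)

lemma pauli1_apply (ab : ZMod 2 × ZMod 2) (i j : Fin 2) :
    pauli1 ab i j = if j = bitFlip i ab.1 then pauliPhase1 ab j else 0 := by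
  obtain ⟨a, b⟩ := ab
  fin_cases a <;> fin_cases b <;> fin_cases i <;> fin_cases j <;>
    simp +decide [pauli1, pauliX, pauliY, pauliZ, pauliPhase1]

lemma norm_pauliPhase {n : ℕ} (u : PauliLabel n) (y : Fin n → Fin 2) :
    ‖pauliPhase u y‖ = 1 := by
  simp only [pauliPhase, norm_prod, pauliPhase1]
  refine Finset.prod_eq_one fun k _ => ?_
  split_ifs <;> simp

lemma pauliPhase_of_snd_eq_zero {n : ℕ} (b : Fin n → ZMod 2) (y : Fin n → Fin 2) :
    pauliPhase (fun k => (b k, 0)) y = 1 :=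
  Finset.prod_eq_one fun k _ => by simp [pauliPhase1]

lemma pauliStr_apply {n : ℕ} (u : PauliLabel n) (x y : Fin n → Fin 2) :
    pauliStr u x y = if y = flipBits (fun k => (u k).1) x then pauliPhase u y else 0 := by
  simp only [pauliStr, of_apply, pauli1_apply]
  split_ifs with h
  · exact Finset.prod_congr rfl fun k _ => if_pos (congrFun h k)
  · obtain ⟨k, hk⟩ := Function.ne_iff.1 h
    exact Finset.prod_eq_zero (Finset.mem_univ k) (if_neg hk)

lemma pauliStr_X_apply {n : ℕ} (b : Fin n → ZMod 2) (x y : Fin n → Fin 2) :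
    pauliStr (fun k => (b k, 0)) x y = if y = flipBits b x then 1 else 0 := by
  rw [pauliStr_apply, pauliPhase_of_snd_eq_zero]

lemma conjTranspose_diagonal_mul_mul_diagonal_apply {ι : Type*} [Fintype ι] [DecidableEq ι]
    (d : ι → ℂ) (A : Matrix ι ι ℂ) (x y : ι) :
    ((diagonal d)ᴴ * A * diagonal d) x y = conj (d x) * A x y * d y := by
  simp [diagonal_conjTranspose, diagonal_mul, mul_diagonal]

lemma norm_eq_one_of_diagonal_mem_unitaryGroup {ι : Type*} [Fintype ι] [DecidableEq ι]
    {d : ι → ℂ} (hd : diagonal d ∈ unitaryGroup ι ℂ) (x : ι) : ‖d x‖ = 1 := by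
  rw [mem_unitaryGroup_iff', star_eq_conjTranspose, diagonal_conjTranspose,
    diagonal_mul_diagonal, ← diagonal_one, diagonal_eq_diagonal_iff] at hd
  have hx : ‖d x‖ ^ 2 = 1 := by exact_mod_cast (conj_mul' (d x)).symm.trans (hd x)
  exact (pow_eq_one_iff_of_nonneg (norm_nonneg _) two_ne_zero).1 hx

lemma dotProduct_ketPlus_mulVec {n : ℕ} (A : QOp n) :
    star (ketPlus n) ⬝ᵥ A *ᵥ ketPlus n = (2 ^ n)⁻¹ * ∑ x, ∑ y, A x y := by
  have hsq : (1 / (Real.sqrt 2 : ℂ)) ^ n * (1 / (Real.sqrt 2 : ℂ)) ^ n = (2 ^ n)⁻¹ := by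
    rw [← mul_pow, ← inv_pow, one_div, ← mul_inv, ← ofReal_mul,
      Real.mul_self_sqrt zero_le_two, ofReal_ofNat]
  have hstar : star (ketPlus n) = ketPlus n := by
    ext x; simp [ketPlus, ← ofReal_pow]
  simp only [hstar, dotProduct, mulVec, ketPlus, ← Finset.sum_mul, ← Finset.mul_sum]
  rw [← hsq]; ring

lemma dotProduct_ketPlus_pauliStr_X_mulVec {n : ℕ} (b : Fin n → ZMod 2) :
    star (ketPlus n) ⬝ᵥ pauliStr (fun k => (b k, 0)) *ᵥ ketPlus n = 1 := by
  simp [dotProduct_ketPlus_mulVec, pauliStr_X_apply, Finset.sum_ite_eq']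

theorem diag_plus_pm_one_iff {n : ℕ} (U : QOp n)
    (hU : U ∈ Matrix.unitaryGroup (Fin n → Fin 2) ℂ) (hdiag : U.IsDiag)
    (u : PauliLabel n) :
    (star (ketPlus n) ⬝ᵥ (Uᴴ * pauliStr u * U).mulVec (ketPlus n) = 1 ∨
        star (ketPlus n) ⬝ᵥ (Uᴴ * pauliStr u * U).mulVec (ketPlus n) = -1) ↔
      ∃ (c : ℂ) (b : Fin n → ZMod 2), (c = 1 ∨ c = -1) ∧
        Uᴴ * pauliStr u * U = c • pauliStr (fun k => (b k, (0 : ZMod 2))) := by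
  constructor
  · obtain ⟨d, rfl⟩ : ∃ d, U = diagonal d := ⟨U.diag, hdiag.diagonal_diag.symm⟩
    set a : Fin n → ZMod 2 := fun k => (u k).1
    set t := fun x => conj (d x) * pauliPhase u (flipBits a x) * d (flipBits a x)
    have hM : ∀ x y, ((diagonal d)ᴴ * pauliStr u * diagonal d) x y =
        if y = flipBits a x then t x else 0 := fun x y => by
      rw [conjTranspose_diagonal_mul_mul_diagonal_apply, pauliStr_apply]
      split_ifs with h
      · subst h; rfl
      · simp
    have ht : ∀ x, ‖t x‖ ≤ 1 := fun x => by
      simp [t, norm_eq_one_of_diagonal_mem_unitaryGroup hU, norm_pauliPhase]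
    intro h
    obtain ⟨c, hc, hval⟩ : ∃ c : ℂ, (c = 1 ∨ c = -1) ∧ (2 ^ n)⁻¹ * ∑ x, t x = c := by
      simp only [dotProduct_ketPlus_mulVec, hM, Finset.sum_ite_eq', Finset.mem_univ,
        if_true] at h
      exact ⟨_, h, rfl⟩
    have htc : ∀ x, t x = c := eq_of_norm_le_one_of_sum_eq_card_mul ht
      (by rcases hc with rfl | rfl <;> simp) (by rw [← hval]; simp)
    exact ⟨c, a, hc, by
      ext x y
      rw [hM, Matrix.smul_apply, pauliStr_X_apply]
      split_ifs <;> simp [htc]⟩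
  · rintro ⟨c, b, hc, hM⟩
    rwa [hM, smul_mulVec, dotProduct_smul, dotProduct_ketPlus_pauliStr_X_mulVec,
      smul_eq_mul, mul_one]
end

section
/- For n ≥ 3, the n-qubit unitary U = C^{n−1}Z · H^{⊗n} · C^{n−1}Z satisfies s(U) = 1, i.e., the only pair (u,v) with tr(σ_u U σ_v U†)/2^n = ±1 is u = v = identity; hence its unitary stabilizer nullity is v(U) = 2n. -/
open Matrix Complex
open scoped Matrix ComplexConjugate Pointwise

/-!
Write `C^{n-1}Z = diag f` with `f = 1 - 2·δ_p`, `p = 11…1`. Since the entries of `H^{⊗n}` are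
the characters `(-1)^{x·y}/√2^n`, the Pauli shifts `x ↦ x + a` turn into characters, the cross
terms `(-1)^{y·w}` cancel, and the Pauli function of `U = diag f · H^{⊗n} · diag f`
factorises as
`P_U(u|v) = phase · S(z_u + x_v, x_u) · S(z_v + x_u, x_v) / 4^n`, where
`S(L, a) = ∑_y (-1)^{L·y} f(y) f(y + a)` and `u = (x_u, z_u)` in the symplectic encoding.
Always `|S| ≤ 2^n`. Moreover `S(L, 0)` is a character sum, hence `0` unless `L = 0`, while for
`a ≠ 0` the product `f(y) f(y + a)` differs from `1` at exactly two points, so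
`S(L, a) = 2^n·[L = 0] - 2(-1)^{L·p} - 2(-1)^{L·(p+a)}` has modulus `< 2^n` once `2^n > 4`.
So `|P_U(u|v)| = 1` forces `x_u = x_v = 0` and then `z_u = z_v = 0`.
-/

namespace StabilizerNullity

lemma zmod_two_cases : ∀ a : ZMod 2, a = 0 ∨ a = 1 := by decide

lemma fin_two_cases : ∀ s : Fin 2, s = 0 ∨ s = 1 := by decide

def bitSign (c : ZMod 2) (s : Fin 2) : ℂ := if c = 1 ∧ s = 1 then -1 else 1

def hadSign (s t : Fin 2) : ℂ := if s = 1 ∧ t = 1 then -1 else 1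

def bitFlip (s : Fin 2) (a : ZMod 2) : Fin 2 := if a = 1 then 1 - s else s

/-- `Y = i X Z`, so `pauli1 (a, b) = phase (a, b) • X^a Z^b`. -/
def phase (ab : ZMod 2 × ZMod 2) : ℂ := if ab = (1, 1) then I else 1

lemma bitFlip_bitFlip (s : Fin 2) (a : ZMod 2) : bitFlip (bitFlip s a) a = s := by
  revert s a; decide

lemma bitFlip_zero (s : Fin 2) : bitFlip s 0 = s := by
  revert s; decide

lemma bitFlip_ne_self {c : ZMod 2} (hc : c ≠ 0) (s : Fin 2) : bitFlip s c ≠ s := by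
  revert c s; decide

lemma pauli1_apply (ab : ZMod 2 × ZMod 2) (s t : Fin 2) :
    pauli1 ab s t = if s = bitFlip t ab.1 then phase ab * bitSign ab.2 t else 0 := by
  obtain ⟨a, b⟩ := ab
  rcases zmod_two_cases a with rfl | rfl <;> rcases zmod_two_cases b with rfl | rfl <;>
    rcases fin_two_cases s with rfl | rfl <;> rcases fin_two_cases t with rfl | rfl <;>
    simp [pauli1, phase, bitSign, bitFlip, pauliX, pauliY, pauliZ, Prod.ext_iff]

lemma hadSign_mul_hadSign_bitFlip (a b : ZMod 2) (s t : Fin 2) :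
    hadSign s (bitFlip t b) * hadSign t (bitFlip s a) = bitSign b s * bitSign a t := by
  rcases zmod_two_cases a with rfl | rfl <;> rcases zmod_two_cases b with rfl | rfl <;>
    rcases fin_two_cases s with rfl | rfl <;> rcases fin_two_cases t with rfl | rfl <;>
    simp [hadSign, bitSign, bitFlip]

lemma bitSign_mul_bitSign (b c : ZMod 2) (s : Fin 2) :
    bitSign b s * bitSign c s = bitSign (b + c) s := by
  rcases zmod_two_cases b with rfl | rfl <;> rcases zmod_two_cases c with rfl | rfl <;>
    rcases fin_two_cases s with rfl | rfl <;> simp [bitSign]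

lemma sum_bitSign (c : ZMod 2) : ∑ s, bitSign c s = if c = 0 then 2 else 0 := by
  rcases zmod_two_cases c with rfl | rfl <;> simp [bitSign, Fin.sum_univ_two]

lemma norm_bitSign (c : ZMod 2) (s : Fin 2) : ‖bitSign c s‖ = 1 := by
  unfold bitSign; split <;> simp

lemma norm_phase (ab : ZMod 2 × ZMod 2) : ‖phase ab‖ = 1 := by
  unfold phase; split <;> simp

section Strings

variable {n : ℕ}

def walsh (L : Fin n → ZMod 2) (y : Fin n → Fin 2) : ℂ := ∏ k, bitSign (L k) (y k)

def flipBits (a : Fin n → ZMod 2) (y : Fin n → Fin 2) : Fin n → Fin 2 :=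
  fun k => bitFlip (y k) (a k)

lemma flipBits_flipBits (a : Fin n → ZMod 2) (y : Fin n → Fin 2) :
    flipBits a (flipBits a y) = y :=
  funext fun k => bitFlip_bitFlip (y k) (a k)

@[simp] lemma flipBits_zero (y : Fin n → Fin 2) : flipBits 0 y = y :=
  funext fun k => bitFlip_zero (y k)

lemma flipBits_ne_self {a : Fin n → ZMod 2} (ha : a ≠ 0) (y : Fin n → Fin 2) :
    flipBits a y ≠ y := by
  obtain ⟨k, hk⟩ := Function.ne_iff.mp ha
  exact fun h => bitFlip_ne_self hk (y k) (congrFun h k)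

lemma walsh_mul_walsh (L M : Fin n → ZMod 2) (y : Fin n → Fin 2) :
    walsh L y * walsh M y = walsh (L + M) y := by
  simp only [walsh, ← Finset.prod_mul_distrib, bitSign_mul_bitSign, Pi.add_apply]

lemma norm_walsh (L : Fin n → ZMod 2) (y : Fin n → Fin 2) : ‖walsh L y‖ = 1 := by
  simp [walsh, norm_bitSign]

@[simp] lemma walsh_zero (y : Fin n → Fin 2) : walsh 0 y = 1 := by
  simp [walsh, bitSign]

lemma sum_walsh (L : Fin n → ZMod 2) :
    ∑ y, walsh L y = if L = 0 then (2 : ℂ) ^ n else 0 := by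
  simp only [walsh, ← Fintype.prod_sum, sum_bitSign]
  split_ifs with hL
  · simp [hL]
  · obtain ⟨k, hk⟩ := Function.ne_iff.mp hL
    exact Finset.prod_eq_zero (Finset.mem_univ k) (if_neg hk)

end Strings

section PauliStrings

variable {n : ℕ}

def xBits (u : PauliLabel n) : Fin n → ZMod 2 := fun k => (u k).1

def zBits (u : PauliLabel n) : Fin n → ZMod 2 := fun k => (u k).2

def pauliPhase (u : PauliLabel n) : ℂ := ∏ k, phase (u k)

@[simp] lemma xBits_zero : xBits (0 : PauliLabel n) = 0 := rfl

@[simp] lemma zBits_zero : zBits (0 : PauliLabel n) = 0 := rfl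

lemma eq_zero_iff_xBits_zBits (u : PauliLabel n) : u = 0 ↔ xBits u = 0 ∧ zBits u = 0 := by
  simp only [funext_iff, xBits, zBits, Pi.zero_apply, Prod.ext_iff, Prod.fst_zero,
    Prod.snd_zero, forall_and]

lemma norm_pauliPhase (u : PauliLabel n) : ‖pauliPhase u‖ = 1 := by
  simp [pauliPhase, norm_phase]

@[simp] lemma pauliPhase_zero : pauliPhase (0 : PauliLabel n) = 1 := by
  simp [pauliPhase, phase, Prod.ext_iff]

lemma pauliStr_apply (u : PauliLabel n) (x y : Fin n → Fin 2) :
    pauliStr u x y =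
      if x = flipBits (xBits u) y then pauliPhase u * walsh (zBits u) y else 0 := by
  simp only [pauliStr, of_apply, pauli1_apply, funext_iff, flipBits, Finset.prod_ite_zero]
  simp only [Finset.prod_mul_distrib, pauliPhase, walsh, xBits, zBits]
  congr
  simp

lemma trace_pauliStr_mul (u : PauliLabel n) (A : QOp n) :
    (pauliStr u * A).trace =
      pauliPhase u * ∑ y, walsh (zBits u) y * A y (flipBits (xBits u) y) := by
  simp only [trace, diag, mul_apply, pauliStr_apply, ite_mul, zero_mul]
  rw [Finset.sum_comm, Finset.mul_sum]
  simp [mul_assoc]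

lemma mul_pauliStr_mul_apply (A B : QOp n) (v : PauliLabel n) (x z : Fin n → Fin 2) :
    (A * pauliStr v * B) x z =
      pauliPhase v * ∑ w, A x (flipBits (xBits v) w) * walsh (zBits v) w * B w z := by
  simp only [mul_apply, pauliStr_apply, mul_ite, mul_zero, ite_mul, zero_mul, Finset.sum_mul]
  rw [Finset.mul_sum]
  refine Finset.sum_congr rfl fun w _ => ?_
  rw [Finset.sum_ite_eq' Finset.univ, if_pos (Finset.mem_univ _)]
  ring

end PauliStrings

section DiagonalHadamard

variable {n : ℕ}

lemma HadN_apply (x y : Fin n → Fin 2) :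
    HadN n x y = (1 / √2 : ℂ) ^ n * ∏ k, hadSign (x k) (y k) := by
  rw [show HadN n x y = ∏ k, ((1 / √2 : ℂ) * hadSign (x k) (y k)) from rfl,
    Finset.prod_mul_distrib, Finset.prod_const, Finset.card_univ, Fintype.card_fin]

lemma HadN_conjTranspose : (HadN n)ᴴ = HadN n := by
  ext x y
  simp only [conjTranspose_apply, HadN_apply, star_mul', star_pow, star_prod]
  congr 1
  · simp [Complex.conj_ofReal]
  · refine Finset.prod_congr rfl fun k _ => ?_
    unfold hadSign
    split_ifs <;> simp_all

/-- The symmetric part `(-1)^{x·z}` of the two Hadamard entries cancels. -/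
lemma HadN_mul_HadN_flipBits (a b : Fin n → ZMod 2) (x z : Fin n → Fin 2) :
    HadN n x (flipBits b z) * HadN n z (flipBits a x) =
      (1 / 2 : ℂ) ^ n * (walsh b x * walsh a z) := by
  have h : (1 / √2 : ℂ) * (1 / √2) = 1 / 2 := by
    rw [div_mul_div_comm, one_mul, ← ofReal_mul, Real.mul_self_sqrt zero_le_two, ofReal_ofNat]
  simp only [HadN_apply, walsh, flipBits]
  rw [mul_mul_mul_comm, ← mul_pow, h, ← Finset.prod_mul_distrib, ← Finset.prod_mul_distrib]
  simp only [hadSign_mul_hadSign_bitFlip]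

variable (f : (Fin n → Fin 2) → ℝ)

def signSum (L a : Fin n → ZMod 2) : ℂ :=
  ∑ y, walsh L y * (f y * f (flipBits a y))

lemma conjTranspose_diagonal_mul_HadN_mul_diagonal :
    (diagonal (fun x => (f x : ℂ)) * HadN n * diagonal (fun x => (f x : ℂ)))ᴴ =
      diagonal (fun x => (f x : ℂ)) * HadN n * diagonal (fun x => (f x : ℂ)) := by
  simp [conjTranspose_mul, diagonal_conjTranspose, HadN_conjTranspose, mul_assoc, Pi.star_def,
    Complex.conj_ofReal]

theorem pauliFun_diagonal_mul_HadN_mul_diagonal (u v : PauliLabel n) :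
    PauliFun (diagonal (fun x => (f x : ℂ)) * HadN n * diagonal (fun x => (f x : ℂ))) u v =
      pauliPhase u * pauliPhase v *
        (signSum f (zBits u + xBits v) (xBits u) * signSum f (zBits v + xBits u) (xBits v)) /
          4 ^ n := by
  set U : QOp n := diagonal (fun x => (f x : ℂ)) * HadN n * diagonal (fun x => (f x : ℂ))
    with hU
  have hU_apply : ∀ x y, U x y = f x * f y * HadN n x y := fun x y => by
    simp [hU, diagonal_mul, mul_diagonal]; ring
  have hterm : ∀ y w, walsh (zBits u) y * (U y (flipBits (xBits v) w) * walsh (zBits v) w *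
      U w (flipBits (xBits u) y)) = (1 / 2 : ℂ) ^ n *
        ((walsh (zBits u + xBits v) y * (f y * f (flipBits (xBits u) y))) *
          (walsh (zBits v + xBits u) w * (f w * f (flipBits (xBits v) w)))) := fun y w => by
    rw [hU_apply, hU_apply, ← walsh_mul_walsh, ← walsh_mul_walsh]
    linear_combination (walsh (zBits u) y * walsh (zBits v) w * f y * f (flipBits (xBits u) y) *
      f w * f (flipBits (xBits v) w)) * HadN_mul_HadN_flipBits (xBits u) (xBits v) y w
  have hsum : ∑ y, walsh (zBits u) y * ∑ w, U y (flipBits (xBits v) w) * walsh (zBits v) w *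
      U w (flipBits (xBits u) y) = (1 / 2 : ℂ) ^ n *
        (signSum f (zBits u + xBits v) (xBits u) * signSum f (zBits v + xBits u) (xBits v)) := by
    rw [signSum, signSum, Finset.sum_mul_sum]
    simp only [Finset.mul_sum, hterm]
  have hassoc : pauliStr u * U * pauliStr v * U = pauliStr u * (U * pauliStr v * U) := by
    simp only [Matrix.mul_assoc]
  rw [PauliFun, conjTranspose_diagonal_mul_HadN_mul_diagonal, ← hU, hassoc, trace_pauliStr_mul]
  simp only [mul_pauliStr_mul_apply, mul_left_comm _ (pauliPhase v), ← Finset.mul_sum, hsum]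
  rw [show (4 : ℂ) ^ n = 2 ^ n * 2 ^ n by rw [← mul_pow]; norm_num, div_pow, one_pow]
  field_simp

lemma norm_signSum_le (hf : ∀ x, |f x| ≤ 1) (L a : Fin n → ZMod 2) :
    ‖signSum f L a‖ ≤ 2 ^ n := by
  calc ‖signSum f L a‖ ≤ ∑ y : Fin n → Fin 2, (1 : ℝ) := by
        refine norm_sum_le_of_le _ fun y _ => ?_
        rw [norm_mul, norm_walsh, one_mul, norm_mul, norm_real, norm_real, Real.norm_eq_abs,
          Real.norm_eq_abs]
        exact mul_le_one₀ (hf y) (abs_nonneg _) (hf _)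
    _ = 2 ^ n := by simp

lemma signSum_zero_right (hf : ∀ x, f x ^ 2 = 1) (L : Fin n → ZMod 2) :
    signSum f L 0 = if L = 0 then (2 : ℂ) ^ n else 0 := by
  simp only [signSum, flipBits_zero, ← sum_walsh]
  refine Finset.sum_congr rfl fun y _ => ?_
  rw [← ofReal_mul, ← sq, hf, ofReal_one, mul_one]

end DiagonalHadamard

section MultiControlledZ

variable {n : ℕ}

def cnzSign (x : Fin n → Fin 2) : ℝ := if x = fun _ => 1 then -1 else 1

lemma CnZ_eq_diagonal : CnZ n = diagonal (fun x => (cnzSign x : ℂ)) := by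
  ext x y
  by_cases hxy : x = y
  · subst hxy
    by_cases hx : ∀ k, x k = 1 <;> simp [CnZ, cnzSign, funext_iff, hx]
  · simp [CnZ, hxy]

lemma cnzSign_sq (x : Fin n → Fin 2) : cnzSign x ^ 2 = 1 := by
  unfold cnzSign; split <;> norm_num

lemma abs_cnzSign (x : Fin n → Fin 2) : |cnzSign x| = 1 := by
  unfold cnzSign; split <;> norm_num

lemma cnzSign_mul_cnzSign_flipBits {a : Fin n → ZMod 2} (ha : a ≠ 0) (y : Fin n → Fin 2) :
    (cnzSign y * cnzSign (flipBits a y) : ℂ) =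
      1 - (if y = fun _ => 1 then 2 else 0) - (if y = flipBits a fun _ => 1 then 2 else 0) := by
  have hp := flipBits_ne_self ha (fun _ => 1)
  have hflip : flipBits a y = (fun _ => 1) ↔ y = flipBits a fun _ => 1 :=
    ⟨fun h => by rw [← h, flipBits_flipBits], fun h => by rw [h, flipBits_flipBits]⟩
  by_cases h₁ : y = fun _ => 1
  · subst h₁
    simp [cnzSign, hp, Ne.symm hp]
    norm_num
  · by_cases h₂ : y = flipBits a fun _ => 1
    · simp [cnzSign, h₂, hp, flipBits_flipBits]
      norm_num
    · simp [cnzSign, h₁, h₂, hflip]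

lemma signSum_cnzSign_of_ne_zero (L : Fin n → ZMod 2) {a : Fin n → ZMod 2} (ha : a ≠ 0) :
    signSum cnzSign L a = (if L = 0 then (2 : ℂ) ^ n else 0) - 2 * walsh L (fun _ => 1) -
      2 * walsh L (flipBits a fun _ => 1) := by
  simp only [signSum, cnzSign_mul_cnzSign_flipBits ha, ← sum_walsh, mul_sub, mul_one,
    Finset.sum_sub_distrib, mul_ite, mul_zero, Finset.sum_ite_eq', Finset.mem_univ, if_true]
  ring

lemma norm_signSum_cnzSign_lt (hn : 3 ≤ n) {L a : Fin n → ZMod 2} (h : ¬(L = 0 ∧ a = 0)) :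
    ‖signSum cnzSign L a‖ < 2 ^ n := by
  have h8 : (8 : ℝ) ≤ 2 ^ n :=
    calc (8 : ℝ) = 2 ^ 3 := by norm_num
      _ ≤ 2 ^ n := pow_le_pow_right₀ (by norm_num) hn
  by_cases ha : a = 0
  · rw [ha, signSum_zero_right _ cnzSign_sq, if_neg fun hL => h ⟨hL, ha⟩, norm_zero]
    positivity
  rw [signSum_cnzSign_of_ne_zero L ha]
  by_cases hL : L = 0
  · rw [if_pos hL, hL, walsh_zero, walsh_zero,
      show (2 : ℂ) ^ n - 2 * 1 - 2 * 1 = ((2 ^ n - 4 : ℝ) : ℂ) by push_cast; ring,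
      norm_real, Real.norm_eq_abs, abs_of_nonneg (by linarith)]
    linarith
  · calc ‖(if L = 0 then (2 : ℂ) ^ n else 0) - 2 * walsh L (fun _ => 1) -
          2 * walsh L (flipBits a fun _ => 1)‖
        ≤ ‖2 * walsh L (fun _ => 1)‖ + ‖2 * walsh L (flipBits a fun _ => 1)‖ := by
          rw [if_neg hL, zero_sub, ← norm_neg (2 * walsh L _)]
          exact norm_sub_le _ _
      _ = 4 := by simp only [norm_mul, norm_walsh, Complex.norm_ofNat]; norm_num
      _ < 2 ^ n := by linarith

theorem pauliFun_CnZ_HadN_CnZ_eq_one_or_neg_one_iff (hn : 3 ≤ n) (u v : PauliLabel n) :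
    (PauliFun (CnZ n * HadN n * CnZ n) u v = 1 ∨ PauliFun (CnZ n * HadN n * CnZ n) u v = -1) ↔
      u = 0 ∧ v = 0 := by
  rw [CnZ_eq_diagonal, pauliFun_diagonal_mul_HadN_mul_diagonal]
  set S₁ := signSum cnzSign (zBits u + xBits v) (xBits u)
  set S₂ := signSum cnzSign (zBits v + xBits u) (xBits v)
  constructor
  · intro hP
    have hnorm : ‖S₁‖ * ‖S₂‖ = 2 ^ n * 2 ^ n := by
      have h1 : ‖pauliPhase u * pauliPhase v * (S₁ * S₂) / 4 ^ n‖ = 1 := by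
        rcases hP with h | h <;> simp [h]
      rw [norm_div, norm_mul, norm_mul, norm_mul, norm_pauliPhase, norm_pauliPhase, norm_pow,
        Complex.norm_ofNat, div_eq_one_iff_eq (by positivity), one_mul, one_mul] at h1
      rw [h1, ← mul_pow]
      norm_num
    by_contra huv
    have hS : ‖S₁‖ < 2 ^ n ∨ ‖S₂‖ < 2 ^ n := by
      by_contra! hge
      obtain ⟨hzu, hxu⟩ := not_imp_comm.mp (norm_signSum_cnzSign_lt hn) hge.1.not_gt
      obtain ⟨hzv, hxv⟩ := not_imp_comm.mp (norm_signSum_cnzSign_lt hn) hge.2.not_gt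
      rw [hxv, add_zero] at hzu
      rw [hxu, add_zero] at hzv
      exact huv ⟨(eq_zero_iff_xBits_zBits u).2 ⟨hxu, hzu⟩,
        (eq_zero_iff_xBits_zBits v).2 ⟨hxv, hzv⟩⟩
    have hle₁ := norm_signSum_le cnzSign (fun x => (abs_cnzSign x).le)
      (zBits u + xBits v) (xBits u)
    have hle₂ := norm_signSum_le cnzSign (fun x => (abs_cnzSign x).le)
      (zBits v + xBits u) (xBits v)
    rcases hS with hS | hS <;> nlinarith [norm_nonneg S₁, norm_nonneg S₂]
  · rintro ⟨rfl, rfl⟩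
    left
    simp only [S₁, S₂, xBits_zero, zBits_zero, add_zero, signSum_zero_right _ cnzSign_sq,
      if_true, pauliPhase_zero]
    rw [show (4 : ℂ) ^ n = 2 ^ n * 2 ^ n by rw [← mul_pow]; norm_num]
    field_simp

end MultiControlledZ

end StabilizerNullity

theorem czhcz_nullity_two_n {n : ℕ} (hn : 3 ≤ n) :
    sU (CnZ n * HadN n * CnZ n) = 1 ∧
      (∀ u v : PauliLabel n,
        (PauliFun (CnZ n * HadN n * CnZ n) u v = 1 ∨
            PauliFun (CnZ n * HadN n * CnZ n) u v = -1) ↔ (u = 0 ∧ v = 0)) ∧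
      nullity (CnZ n * HadN n * CnZ n) = 2 * n := by
  have hiff := StabilizerNullity.pauliFun_CnZ_HadN_CnZ_eq_one_or_neg_one_iff hn
  have hsU : sU (CnZ n * HadN n * CnZ n) = 1 := by
    rw [sU, ← Set.ncard_singleton ((0 : PauliLabel n), (0 : PauliLabel n))]
    congr 1
    ext ⟨u, v⟩
    simp [hiff]
  refine ⟨hsU, hiff, ?_⟩
  rw [nullity, hsU, Nat.cast_one, Real.logb_one, sub_zero]
end

section
/- Let |Φ⟩ = 2^{−n/2} ∑_{x ∈ {0,1}^n} |x⟩|x⟩ be the 2n-qubit maximally entangled state. For any n-qubit unitary U and any Pauli strings u, v, the state Pauli function satisfies ⟨Φ|(σ_u ⊗ U†σ_v U)|Φ⟩ = ±tr(σ_v U σ_u U†)/2^n, where the sign depends only on u. Consequently s((I ⊗ U)|Φ⟩) = s(U) and v_s((I⊗U)|Φ⟩) = v(U). -/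
open Matrix Complex
open scoped Matrix ComplexConjugate Pointwise

/-! In the computational basis, `⟨Φ|A ⊗ B|Φ⟩ = tr(Aᵀ B)/2ⁿ` (the transpose trick). A Pauli
string satisfies `σ_uᵀ = ±σ_u` with a sign depending only on `u`, so cyclicity of the trace turns
`⟨Φ|σ_u ⊗ U†σ_vU|Φ⟩` into `±tr(σ_v U σ_u U†)/2ⁿ`. Conjugating `σ_w` by `I ⊗ U` shows that the
state Pauli function of `(I ⊗ U)|Φ⟩` at `w = (u, v)` is exactly this quantity, hence it is `±1`
iff `P_U(v|u)` is, and `w ↦ (v, u)` is a bijection between the two counted sets. -/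

theorem Fintype.sum_fin_append {n m : ℕ} {α β : Type*} [Fintype α] [AddCommMonoid β]
    (f : (Fin (n + m) → α) → β) :
    ∑ x, f x = ∑ a : Fin n → α, ∑ b : Fin m → α, f (Fin.append a b) := by
  rw [← (Fin.appendEquiv n m).sum_comp, Fintype.sum_prod_type]
  rfl

section TensorOp

variable {n m : ℕ}

@[simp]
theorem tensorOp_apply_append (A : QOp n) (B : QOp m) (a c : Fin n → Fin 2)
    (b d : Fin m → Fin 2) :
    tensorOp A B (Fin.append a b) (Fin.append c d) = A a c * B b d := by
  simp [tensorOp]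

theorem tensorOp_mul_tensorOp (A C : QOp n) (B D : QOp m) :
    tensorOp A B * tensorOp C D = tensorOp (A * C) (B * D) := by
  ext x y
  simp only [mul_apply, tensorOp, of_apply, Fintype.sum_fin_append, Fin.append_left,
    Fin.append_right, Finset.sum_mul_sum]
  exact Finset.sum_congr rfl fun _ _ => Finset.sum_congr rfl fun _ _ => by ring

theorem conjTranspose_tensorOp (A : QOp n) (B : QOp m) :
    (tensorOp A B)ᴴ = tensorOp Aᴴ Bᴴ := by
  ext x y
  simp [tensorOp]

theorem pauliStr_eq_tensorOp (w : PauliLabel (n + m)) :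
    pauliStr w = tensorOp (pauliStr (fstLab w)) (pauliStr (sndLab w)) := by
  ext x y
  simp only [pauliStr, tensorOp, fstLab, sndLab, of_apply, Fin.prod_univ_add]

end TensorOp

/-- `(-1)^{#Y in u}`: the label `(1, 1)` is `Y`, the only antisymmetric single-qubit Pauli. -/
def pauliTransposeSign {n : ℕ} (u : PauliLabel n) : ℂ :=
  ∏ k, if u k = (1, 1) then -1 else 1

theorem pauliTransposeSign_mul_self {n : ℕ} (u : PauliLabel n) :
    pauliTransposeSign u * pauliTransposeSign u = 1 := by
  rw [pauliTransposeSign, ← Finset.prod_mul_distrib]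
  exact Finset.prod_eq_one fun k _ => by split_ifs <;> norm_num

theorem pauli1_apply_swap (ab : ZMod 2 × ZMod 2) (i j : Fin 2) :
    pauli1 ab j i = (if ab = (1, 1) then -1 else 1) * pauli1 ab i j := by
  obtain ⟨a, b⟩ := ab
  fin_cases a <;> fin_cases b <;> fin_cases i <;> fin_cases j <;>
    simp +decide [pauli1, pauliX, pauliY, pauliZ]

theorem transpose_pauliStr {n : ℕ} (u : PauliLabel n) :
    (pauliStr u)ᵀ = pauliTransposeSign u • pauliStr u := by
  ext x y
  simp only [transpose_apply, Matrix.smul_apply, pauliStr, of_apply, pauliTransposeSign,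
    smul_eq_mul, ← Finset.prod_mul_distrib]
  exact Finset.prod_congr rfl fun k _ => pauli1_apply_swap (u k) (x k) (y k)

section MaxEnt

variable {n : ℕ}

theorem maxEnt_append (a b : Fin n → Fin 2) :
    maxEnt n (Fin.append a b) = if a = b then (1 / (Real.sqrt 2 : ℂ)) ^ n else 0 := by
  simp only [maxEnt, Fin.append_left, Fin.append_right]

theorem star_maxEnt : star (maxEnt n) = maxEnt n := by
  funext x
  simp only [Pi.star_apply, maxEnt]
  split_ifs <;> simp [← Complex.ofReal_pow]

theorem maxEnt_amplitude_mul_self :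
    (1 / (Real.sqrt 2 : ℂ)) ^ n * (1 / (Real.sqrt 2 : ℂ)) ^ n = 1 / 2 ^ n := by
  rw [← mul_pow, div_mul_div_comm, one_mul, ← Complex.ofReal_mul,
    Real.mul_self_sqrt zero_le_two]
  norm_num [div_pow]

theorem maxEnt_expect_tensorOp (A B : QOp n) :
    star (maxEnt n) ⬝ᵥ tensorOp A B *ᵥ maxEnt n = (Aᵀ * B).trace / 2 ^ n := by
  simp only [star_maxEnt, dotProduct, mulVec, Fintype.sum_fin_append, maxEnt_append,
    tensorOp_apply_append]
  simp only [mul_ite, mul_zero, ite_mul, zero_mul, Finset.sum_ite_eq, Finset.mem_univ, if_true]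
  have htrace : (Aᵀ * B).trace = ∑ a, ∑ c, A a c * B a c := by
    simp only [trace, diag_apply, mul_apply, transpose_apply]
    exact Finset.sum_comm
  rw [htrace, Finset.sum_div]
  refine Finset.sum_congr rfl fun a _ => ?_
  rw [Finset.mul_sum, Finset.sum_div]
  refine Finset.sum_congr rfl fun c _ => ?_
  linear_combination A a c * B a c * maxEnt_amplitude_mul_self (n := n)

end MaxEnt

theorem mul_eq_one_or_neg_one_iff {R : Type*} [CommRing R] [NoZeroDivisors R] {γ z : R}
    (hγ : γ * γ = 1) : (γ * z = 1 ∨ γ * z = -1) ↔ (z = 1 ∨ z = -1) := by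
  rw [← mul_self_eq_one_iff, ← mul_self_eq_one_iff, mul_mul_mul_comm, hγ, one_mul]

theorem star_mulVec_dotProduct_mulVec {ι : Type*} [Fintype ι] (M N : Matrix ι ι ℂ)
    (ψ : ι → ℂ) : star (M *ᵥ ψ) ⬝ᵥ N *ᵥ (M *ᵥ ψ) = star ψ ⬝ᵥ (Mᴴ * N * M) *ᵥ ψ := by
  rw [star_mulVec, ← dotProduct_mulVec, mulVec_mulVec, mulVec_mulVec, Matrix.mul_assoc]

theorem maxEnt_expect_pauliStr_tensorOp {n : ℕ} (U : QOp n) (u v : PauliLabel n) :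
    star (maxEnt n) ⬝ᵥ tensorOp (pauliStr u) (Uᴴ * pauliStr v * U) *ᵥ maxEnt n
      = pauliTransposeSign u * (pauliStr v * U * pauliStr u * Uᴴ).trace / 2 ^ n := by
  have hcyc : (pauliStr u * (Uᴴ * pauliStr v * U)).trace
      = (pauliStr v * U * pauliStr u * Uᴴ).trace := by
    simpa only [Matrix.mul_assoc] using trace_mul_comm (pauliStr u * Uᴴ) (pauliStr v * U)
  rw [maxEnt_expect_tensorOp, transpose_pauliStr, smul_mul, trace_smul, smul_eq_mul, hcyc]

theorem statePauliFun_tensorOp_one_mulVec_maxEnt {n : ℕ} (U : QOp n) (w : PauliLabel (n + n)) :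
    statePauliFun (tensorOp 1 U *ᵥ maxEnt n) w
      = pauliTransposeSign (fstLab w) * PauliFun U (sndLab w) (fstLab w) := by
  have hconj : (tensorOp 1 U)ᴴ * pauliStr w * tensorOp 1 U
      = tensorOp (pauliStr (fstLab w)) (Uᴴ * pauliStr (sndLab w) * U) := by
    rw [pauliStr_eq_tensorOp, conjTranspose_tensorOp, conjTranspose_one, tensorOp_mul_tensorOp,
      tensorOp_mul_tensorOp, one_mul, Matrix.mul_one]
  rw [statePauliFun, star_mulVec_dotProduct_mulVec, hconj, maxEnt_expect_pauliStr_tensorOp,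
    PauliFun, mul_div_assoc]

theorem sState_tensorOp_one_mulVec_maxEnt {n : ℕ} (U : QOp n) :
    sState (tensorOp 1 U *ᵥ maxEnt n) = sU U := by
  let e : PauliLabel (n + n) ≃ PauliLabel n × PauliLabel n :=
    (Fin.appendEquiv n n).symm.trans (Equiv.prodComm _ _)
  have hset : {w | statePauliFun (tensorOp 1 U *ᵥ maxEnt n) w = 1 ∨
      statePauliFun (tensorOp 1 U *ᵥ maxEnt n) w = -1}
      = e ⁻¹' {p | PauliFun U p.1 p.2 = 1 ∨ PauliFun U p.1 p.2 = -1} := by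
    ext w
    simp only [Set.mem_preimage, statePauliFun_tensorOp_one_mulVec_maxEnt]
    exact mul_eq_one_or_neg_one_iff (pauliTransposeSign_mul_self _)
  rw [sState, sU, hset, Set.ncard_preimage_of_injective_subset_range e.injective (by simp)]

theorem maxEnt_state_nullity_eq_unitary_nullity_general {n : ℕ} (U : QOp n) :
    (∀ u : PauliLabel n, ∃ γ : ℂ, (γ = 1 ∨ γ = -1) ∧ ∀ v : PauliLabel n,
      star (maxEnt n) ⬝ᵥ
          (tensorOp (pauliStr u) (Uᴴ * pauliStr v * U)).mulVec (maxEnt n)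
        = γ * (pauliStr v * U * pauliStr u * Uᴴ).trace / 2 ^ n) ∧
    sState ((tensorOp (1 : QOp n) U).mulVec (maxEnt n)) = sU U ∧
    stateNullity ((tensorOp (1 : QOp n) U).mulVec (maxEnt n)) = nullity U := by
  refine ⟨fun u => ⟨pauliTransposeSign u, mul_self_eq_one_iff.mp (pauliTransposeSign_mul_self u),
    maxEnt_expect_pauliStr_tensorOp U u⟩, sState_tensorOp_one_mulVec_maxEnt U, ?_⟩
  rw [stateNullity, nullity, sState_tensorOp_one_mulVec_maxEnt]
  push_cast
  ring

theorem maxEnt_state_nullity_eq_unitary_nullity {n : ℕ} (U : QOp n)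
    (hU : U ∈ Matrix.unitaryGroup (Fin n → Fin 2) ℂ) :
    (∀ u : PauliLabel n, ∃ γ : ℂ, (γ = 1 ∨ γ = -1) ∧ ∀ v : PauliLabel n,
      star (maxEnt n) ⬝ᵥ
          (tensorOp (pauliStr u) (Uᴴ * pauliStr v * U)).mulVec (maxEnt n)
        = γ * (pauliStr v * U * pauliStr u * Uᴴ).trace / 2 ^ n) ∧
    sState ((tensorOp (1 : QOp n) U).mulVec (maxEnt n)) = sU U ∧
    stateNullity ((tensorOp (1 : QOp n) U).mulVec (maxEnt n)) = nullity U :=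
  maxEnt_state_nullity_eq_unitary_nullity_general U
end
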